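/- arXiv:1704.03017 — 4 statements merged into one kernel-verified Lean document; each statement's English description precedes it below -/
import Mathlib

section
/- Let X and Y be nonempty complete metric spaces and let H : X × Y → X × Y be a continuous map of the form H(x, y) = (F(x), G(x, y)), where F : X → X does not depend on y. Suppose there is a constant θ with 0 ≤ θ < 1 such that d(F(x₁), F(x₂)) ≤ θ·d(x₁, x₂) for all x₁, x₂ ∈ X, and d(G(x, y₁), G(x, y₂)) ≤ θ·d(y₁, y₂) for all x ∈ X and y₁, y₂ ∈ Y. Then H has a unique fixed point (x*, y*) in X × Y, and for every initial point (x₀, y₀) ∈ X × Y the sequence of iterates (xₙ, yₙ) = Hⁿ(x₀, y₀) converges to (x*, y*). -/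
open Filter Topology

/-- If `a (n+1) ≤ θ * a n + ε n` with `a n ≥ 0`, `0 ≤ θ < 1` and `ε → 0`, then `a → 0`. -/
lemma fiber_contraction_aux {θ : ℝ} (hθ0 : 0 ≤ θ) (hθ1 : θ < 1) {a ε : ℕ → ℝ}
    (ha : ∀ n, 0 ≤ a n) (hrec : ∀ n, a (n + 1) ≤ θ * a n + ε n)
    (hε : Tendsto ε atTop (𝓝 0)) : Tendsto a atTop (𝓝 0) := by
  rw [Metric.tendsto_atTop]
  intro δ hδ
  have hδ2 : 0 < (1 - θ) * δ / 2 := by nlinarith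
  obtain ⟨N, hN⟩ := (Metric.tendsto_atTop.1 hε) ((1 - θ) * δ / 2) hδ2
  have key : ∀ k, a (N + k) ≤ θ ^ k * a N + δ / 2 := by
    intro k
    induction k with
    | zero => simp; nlinarith [ha N]
    | succ k ih =>
      have hεk : ε (N + k) ≤ (1 - θ) * δ / 2 := by
        have := hN (N + k) (Nat.le_add_right N k)
        rw [Real.dist_eq, abs_sub_comm, abs_sub_lt_iff] at this
        linarith [this.2]
      have h1 : a (N + (k + 1)) ≤ θ * a (N + k) + ε (N + k) := hrec (N + k)
      have h2 : θ * a (N + k) ≤ θ * (θ ^ k * a N + δ / 2) :=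
        mul_le_mul_of_nonneg_left ih hθ0
      calc a (N + (k + 1)) ≤ θ * (θ ^ k * a N + δ / 2) + (1 - θ) * δ / 2 := by linarith
        _ ≤ θ ^ (k + 1) * a N + δ / 2 := by ring_nf; nlinarith [pow_nonneg hθ0 k, ha N]
  have hpow : Tendsto (fun k => θ ^ k * a N) atTop (𝓝 0) := by
    simpa using (tendsto_pow_atTop_nhds_zero_of_lt_one hθ0 hθ1).mul_const (a N)
  obtain ⟨K, hK⟩ := (Metric.tendsto_atTop.1 hpow) (δ / 2) (by linarith)
  refine ⟨N + K, fun n hn => ?_⟩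
  obtain ⟨k, rfl⟩ : ∃ k, n = N + k := ⟨n - N, by omega⟩
  have hkK : K ≤ k := by omega
  have hmono : θ ^ k * a N ≤ θ ^ K * a N :=
    mul_le_mul_of_nonneg_right (pow_le_pow_of_le_one hθ0 hθ1.le hkK) (ha N)
  have hKb : θ ^ K * a N < δ / 2 := by
    have h := hK K le_rfl
    rwa [Real.dist_eq, sub_zero, abs_of_nonneg (mul_nonneg (pow_nonneg hθ0 K) (ha N))] at h
  have := key k
  rw [Real.dist_eq, sub_zero, abs_of_nonneg (ha _)]
  linarith

/-- Fiber contraction principle: if `H (x, y) = (F x, G x y)` is continuous on a product of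
nonempty complete metric spaces, `F` is a `θ`-contraction (independent of `y`) and `G` is a
uniform `θ`-contraction in its second variable with `0 ≤ θ < 1`, then `H` has a unique fixed
point and all orbits of iterates converge to it. -/
theorem fiber_contraction_principle
    {X Y : Type*} [MetricSpace X] [CompleteSpace X] [Nonempty X]
    [MetricSpace Y] [CompleteSpace Y] [Nonempty Y]
    (H : X × Y → X × Y) (hcont : Continuous H)
    (F : X → X) (G : X → Y → Y)
    (hform : ∀ x y, H (x, y) = (F x, G x y))
    (θ : ℝ) (hθ0 : 0 ≤ θ) (hθ1 : θ < 1)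
    (hF : ∀ x₁ x₂ : X, dist (F x₁) (F x₂) ≤ θ * dist x₁ x₂)
    (hG : ∀ (x : X) (y₁ y₂ : Y), dist (G x y₁) (G x y₂) ≤ θ * dist y₁ y₂) :
    ∃ p : X × Y, H p = p ∧ (∀ q : X × Y, H q = q → q = p) ∧
      ∀ p₀ : X × Y, Filter.Tendsto (fun n => H^[n] p₀) Filter.atTop (nhds p) := by
  set K : NNReal := ⟨θ, hθ0⟩ with hK
  have hK1 : K < 1 := by exact_mod_cast hθ1
  have hFc : ContractingWith K F := ⟨hK1, LipschitzWith.of_dist_le_mul hF⟩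
  set xs : X := hFc.fixedPoint F with hxs
  have hxfix : F xs = xs := hFc.fixedPoint_isFixedPt
  have hGc : ContractingWith K (G xs) := ⟨hK1, LipschitzWith.of_dist_le_mul (hG xs)⟩
  set ys : Y := hGc.fixedPoint (G xs) with hys
  have hyfix : G xs ys = ys := hGc.fixedPoint_isFixedPt
  refine ⟨(xs, ys), by rw [hform, hxfix, hyfix], ?_, ?_⟩
  · rintro ⟨x, y⟩ hq
    rw [hform] at hq
    have hx : F x = x := congrArg Prod.fst hq
    have hx' : x = xs := hFc.fixedPoint_unique' hx hxfix
    have hy : G xs y = y := by rw [← hx']; exact congrArg Prod.snd hq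
    have hy' : y = ys := hGc.fixedPoint_unique' hy hyfix
    simp [hx', hy']
  · intro p₀
    set p : ℕ → X × Y := fun n => H^[n] p₀ with hp
    have hstep : ∀ n, p (n + 1) = (F (p n).1, G (p n).1 (p n).2) := by
      intro n
      have : p (n + 1) = H (p n) := by
        simp [hp, Function.iterate_succ_apply']
      rw [this, ← hform]
    have hfst : ∀ n, (p n).1 = F^[n] p₀.1 := by
      intro n
      induction n with
      | zero => simp [hp]
      | succ n ih => rw [hstep n, ih, Function.iterate_succ_apply']
    have hxconv : Tendsto (fun n => (p n).1) atTop (𝓝 xs) := by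
      simp only [hfst]
      exact hFc.tendsto_iterate_fixedPoint p₀.1
    -- continuity of x ↦ G x ys
    have hGcont : Continuous (fun x : X => G x ys) := by
      have : (fun x : X => G x ys) = fun x => (H (x, ys)).2 := by
        funext x; rw [hform]
      rw [this]
      exact continuous_snd.comp (hcont.comp (continuous_id.prodMk continuous_const))
    have hεconv : Tendsto (fun n => dist (G (p n).1 ys) ys) atTop (𝓝 0) := by
      have h1 : Tendsto (fun n => G (p n).1 ys) atTop (𝓝 (G xs ys)) :=
        (hGcont.tendsto xs).comp hxconv
      rw [hyfix] at h1
      simpa using h1.dist (tendsto_const_nhds (x := ys))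
    have hyconv : Tendsto (fun n => dist (p n).2 ys) atTop (𝓝 0) := by
      apply fiber_contraction_aux hθ0 hθ1 (fun n => dist_nonneg) _ hεconv
      intro n
      rw [hstep n]
      calc dist (G (p n).1 (p n).2) ys
          ≤ dist (G (p n).1 (p n).2) (G (p n).1 ys) + dist (G (p n).1 ys) ys :=
            dist_triangle _ _ _
        _ ≤ θ * dist (p n).2 ys + dist (G (p n).1 ys) ys := by
            linarith [hG (p n).1 (p n).2 ys]
    have hyconv' : Tendsto (fun n => (p n).2) atTop (𝓝 ys) :=
      tendsto_iff_dist_tendsto_zero.2 hyconv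
    have : Tendsto (fun n => ((p n).1, (p n).2)) atTop (𝓝 (xs, ys)) :=
      hxconv.prodMk_nhds hyconv'
    simpa using this
end

section
/- Let (λ_i)_{i≥1} be a nondecreasing sequence of positive real numbers, let m ≥ 0 be a natural number, let 0 ≤ α < 1, let t > 0 be real, and let (a_i)_{i≥1} be a square-summable sequence of real numbers. Then Σ_{i ≥ m+1} λ_i^{2α} e^{−2λ_i t} a_i² ≤ e^{−2λ_{m+1} t} (max(λ_{m+1}, α/t))^{2α} · Σ_{i ≥ m+1} a_i² (in particular the left-hand series converges). -/
lemma semigroup_tail_ptwise {μ x α t : ℝ} (hμ : 0 < μ) (hx : μ ≤ x)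
    (hα : 0 ≤ α) (ht : 0 < t) :
    x ^ (2 * α) * Real.exp (-(2 * x * t)) ≤
      Real.exp (-(2 * μ * t)) * (max μ (α / t)) ^ (2 * α) := by
  set M := max μ (α / t) with hMdef
  have hM : 0 < M := lt_of_lt_of_le hμ (le_max_left _ _)
  have hxpos : 0 < x := hμ.trans_le hx
  rcases le_or_gt x M with h | h
  · rw [mul_comm (Real.exp _)]
    exact mul_le_mul (Real.rpow_le_rpow hxpos.le h (by positivity))
      (Real.exp_le_exp.2 (by nlinarith)) (Real.exp_pos _).le (by positivity)
  · have hαt : α ≤ M * t := by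
      have h1 : α / t ≤ M := le_max_right _ _
      have := mul_le_mul_of_nonneg_right h1 ht.le
      rwa [div_mul_cancel₀ _ ht.ne'] at this
    have key : x ^ (2 * α) ≤ M ^ (2 * α) * Real.exp (2 * (x - M) * t) := by
      have h1 : x ^ (2 * α) = M ^ (2 * α) * (x / M) ^ (2 * α) := by
        rw [← Real.mul_rpow hM.le (by positivity), mul_div_cancel₀ _ hM.ne']
      have hdiv : 0 < x / M := by positivity
      have h2 : (x / M) ^ (2 * α) = Real.exp (2 * α * Real.log (x / M)) := by
        rw [Real.rpow_def_of_pos hdiv, mul_comm]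
      have hlog : Real.log (x / M) ≤ x / M - 1 := Real.log_le_sub_one_of_pos hdiv
      have h3 : 2 * α * Real.log (x / M) ≤ 2 * (x - M) * t := by
        have h4 : 2 * α * Real.log (x / M) ≤ 2 * α * (x / M - 1) :=
          mul_le_mul_of_nonneg_left hlog (by positivity)
        have h5 : 2 * α * (x / M - 1) ≤ 2 * (x - M) * t := by
          have hxm : 0 ≤ x - M := le_of_lt (by linarith)
          have : α * (x - M) ≤ M * t * (x - M) := mul_le_mul_of_nonneg_right hαt hxm
          rw [div_sub_one hM.ne']
          rw [mul_div_assoc', div_le_iff₀ hM]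
          nlinarith
        linarith
      calc x ^ (2 * α) = M ^ (2 * α) * Real.exp (2 * α * Real.log (x / M)) := by
            rw [h1, h2]
        _ ≤ M ^ (2 * α) * Real.exp (2 * (x - M) * t) := by
            exact mul_le_mul_of_nonneg_left (Real.exp_le_exp.2 h3) (by positivity)
    have hMμ : μ ≤ M := le_max_left _ _
    calc x ^ (2 * α) * Real.exp (-(2 * x * t))
        ≤ M ^ (2 * α) * Real.exp (2 * (x - M) * t) * Real.exp (-(2 * x * t)) :=
          mul_le_mul_of_nonneg_right key (Real.exp_pos _).le
      _ = M ^ (2 * α) * Real.exp (-(2 * M * t)) := by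
          rw [mul_assoc, ← Real.exp_add]; ring_nf
      _ ≤ Real.exp (-(2 * μ * t)) * M ^ (2 * α) := by
          rw [mul_comm]
          exact mul_le_mul_of_nonneg_right (Real.exp_le_exp.2 (by nlinarith))
            (by positivity)

/-- Smoothing estimate for the tail of the spectral decomposition: for a nondecreasing
sequence of positive reals `λ`, `0 ≤ α < 1`, `t > 0` and a square-summable sequence `a`,
`Σ_{i ≥ m+1} λ_i^{2α} e^{−2λ_i t} a_i² ≤ e^{−2λ_{m+1} t} (max λ_{m+1} (α/t))^{2α} Σ_{i ≥ m+1} a_i²`,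
the left-hand series being convergent. -/
theorem semigroup_tail_smoothing
    (lam : ℕ → ℝ) (hpos : ∀ i, 0 < lam i) (hmono : Monotone lam)
    (m : ℕ) (α : ℝ) (hα0 : 0 ≤ α) (hα1 : α < 1) (t : ℝ) (ht : 0 < t)
    (a : ℕ → ℝ) (ha : Summable (fun i => a i ^ 2)) :
    Summable (fun i : {i : ℕ // m + 1 ≤ i} =>
      lam i.1 ^ (2 * α) * Real.exp (-(2 * lam i.1 * t)) * a i.1 ^ 2) ∧
    (∑' i : {i : ℕ // m + 1 ≤ i},
        lam i.1 ^ (2 * α) * Real.exp (-(2 * lam i.1 * t)) * a i.1 ^ 2)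
      ≤ Real.exp (-(2 * lam (m + 1) * t)) * (max (lam (m + 1)) (α / t)) ^ (2 * α) *
        ∑' i : {i : ℕ // m + 1 ≤ i}, a i.1 ^ 2 := by
  set C := Real.exp (-(2 * lam (m + 1) * t)) * (max (lam (m + 1)) (α / t)) ^ (2 * α)
    with hCdef
  have hC : 0 ≤ C := by
    have : (0:ℝ) < max (lam (m + 1)) (α / t) :=
      lt_of_lt_of_le (hpos (m+1)) (le_max_left _ _)
    positivity
  have hle : ∀ i : {i : ℕ // m + 1 ≤ i},
      lam i.1 ^ (2 * α) * Real.exp (-(2 * lam i.1 * t)) * a i.1 ^ 2 ≤ C * a i.1 ^ 2 := by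
    intro i
    exact mul_le_mul_of_nonneg_right
      (semigroup_tail_ptwise (hpos (m+1)) (hmono i.2) hα0 ht) (sq_nonneg _)
  have hnn : ∀ i : {i : ℕ // m + 1 ≤ i},
      0 ≤ lam i.1 ^ (2 * α) * Real.exp (-(2 * lam i.1 * t)) * a i.1 ^ 2 := by
    intro i
    have := (hpos i.1)
    positivity
  have hsumC : Summable (fun i : {i : ℕ // m + 1 ≤ i} => C * a i.1 ^ 2) :=
    (ha.subtype _).mul_left C
  have hsum : Summable (fun i : {i : ℕ // m + 1 ≤ i} =>
      lam i.1 ^ (2 * α) * Real.exp (-(2 * lam i.1 * t)) * a i.1 ^ 2) :=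
    Summable.of_nonneg_of_le hnn hle hsumC
  refine ⟨hsum, ?_⟩
  calc (∑' i : {i : ℕ // m + 1 ≤ i},
        lam i.1 ^ (2 * α) * Real.exp (-(2 * lam i.1 * t)) * a i.1 ^ 2)
      ≤ ∑' i : {i : ℕ // m + 1 ≤ i}, C * a i.1 ^ 2 := Summable.tsum_le_tsum hle hsum hsumC
    _ = C * ∑' i : {i : ℕ // m + 1 ≤ i}, a i.1 ^ 2 := tsum_mul_left
end

section
/- Let T ≤ 0, let C, K ≥ 0, and let λ, ν be real numbers with 0 ≤ λ ≤ ν. Let φ : [T, 0] → ℝ be continuous and nonnegative, and suppose that for every t ∈ [T, 0], φ(t) ≤ C e^{−νt} + K ∫_t^0 e^{−λ(t−s)} φ(s) ds. Then for every t ∈ [T, 0], φ(t) ≤ C e^{−(ν+K)t}. -/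
/-!
With `ψ(s) = e^{νs} φ(s)`, the hypothesis and `λ ≤ ν` give `ψ(t) ≤ C + K ∫_t^0 ψ`,
since `e^{-λ(t-s)} ≤ e^{-ν(t-s)}` for `s ≥ t`. For this integral inequality,
`e^{Kt} (C + K ∫_t^0 ψ)` has derivative `K e^{Kt} (C + K ∫_t^0 ψ - ψ(t)) ≥ 0`, so it is at
most its value `C` at `0`; hence `ψ(t) ≤ C e^{-Kt}`.
-/

open Real Set intervalIntegral MeasureTheory

section IntegralLeft

variable {f : ℝ → ℝ} {a b : ℝ}

theorem hasDerivAt_integral_left_of_continuousOn (hf : ContinuousOn f (Icc a b)) {t : ℝ}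
    (ht : t ∈ Ioo a b) : HasDerivAt (fun u => ∫ s in u..b, f s) (-f t) t :=
  integral_hasDerivAt_left
    ((hf.mono (Icc_subset_Icc_left ht.1.le)).intervalIntegrable_of_Icc ht.2.le)
    ((hf.mono Ioo_subset_Icc_self).stronglyMeasurableAtFilter isOpen_Ioo t ht)
    (hf.continuousAt (Icc_mem_nhds ht.1 ht.2))

theorem continuousOn_integral_left (hf : ContinuousOn f (Icc a b)) (hab : a ≤ b) :
    ContinuousOn (fun u => ∫ s in u..b, f s) (Icc a b) := by
  have h : IntegrableOn f (uIcc a b) volume := by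
    rw [uIcc_of_le hab]; exact hf.integrableOn_Icc
  simpa only [uIcc_of_le hab] using continuousOn_primitive_interval_left h

theorem le_mul_exp_of_le_add_mul_integral {C K : ℝ} (hK : 0 ≤ K) (hf : ContinuousOn f (Icc a b))
    (h : ∀ t ∈ Icc a b, f t ≤ C + K * ∫ s in t..b, f s) :
    ∀ t ∈ Icc a b, f t ≤ C * exp (K * (b - t)) := by
  intro t ht
  set u : ℝ → ℝ := fun t => C + K * ∫ s in t..b, f s
  have hab : a ≤ b := ht.1.trans ht.2
  have hmono : MonotoneOn (fun t => exp (K * t) * u t) (Icc a b) := by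
    refine monotoneOn_of_hasDerivWithinAt_nonneg (convex_Icc a b)
      (f' := fun t => K * exp (K * t) * (u t - f t)) ?_ (fun t ht => ?_) (fun t ht => ?_)
    · exact (continuous_exp.comp (continuous_const_mul K)).continuousOn.mul
        (continuousOn_const.add (continuousOn_const.mul (continuousOn_integral_left hf hab)))
    · rw [interior_Icc] at ht
      have hu : HasDerivAt u (K * -f t) t :=
        ((hasDerivAt_integral_left_of_continuousOn hf ht).const_mul K).const_add C
      have he : HasDerivAt (fun t => exp (K * t)) (exp (K * t) * K) t := by
        simpa using ((hasDerivAt_id t).const_mul K).exp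
      exact ((he.mul hu).congr_deriv (by ring)).hasDerivWithinAt
    · rw [interior_Icc] at ht
      exact mul_nonneg (mul_nonneg hK (exp_pos _).le) (sub_nonneg.2 (h t (Ioo_subset_Icc_self ht)))
  have hub : exp (K * t) * u t ≤ exp (K * b) * C := by
    simpa [u] using hmono ht (right_mem_Icc.2 hab) ht.2
  calc f t ≤ u t := h t ht
    _ = exp (-(K * t)) * (exp (K * t) * u t) := by rw [← mul_assoc, ← exp_add]; simp
    _ ≤ exp (-(K * t)) * (exp (K * b) * C) := by gcongr
    _ = C * exp (K * (b - t)) := by rw [mul_sub, sub_eq_add_neg, exp_add]; ring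

end IntegralLeft

theorem integral_exp_neg_mul_sub_mul_le {φ : ℝ → ℝ} {t b lam ν : ℝ} (hlamν : lam ≤ ν)
    (htb : t ≤ b) (hφ : ContinuousOn φ (Icc t b)) (hφ₀ : ∀ s ∈ Icc t b, 0 ≤ φ s) :
    ∫ s in t..b, exp (-(lam * (t - s))) * φ s ≤
      exp (-(ν * t)) * ∫ s in t..b, exp (ν * s) * φ s := by
  rw [← intervalIntegral.integral_const_mul]
  refine integral_mono_on htb ?_ ?_ fun s hs => ?_
  · exact ((continuous_exp.comp (by fun_prop)).continuousOn.mul hφ).intervalIntegrable_of_Icc htb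
  · exact (continuousOn_const.mul ((continuous_exp.comp (by fun_prop)).continuousOn.mul hφ)
      ).intervalIntegrable_of_Icc htb
  · have hexp : exp (-(lam * (t - s))) ≤ exp (-(ν * (t - s))) :=
      exp_le_exp.2 (by nlinarith [hs.1])
    calc exp (-(lam * (t - s))) * φ s ≤ exp (-(ν * (t - s))) * φ s := by
          gcongr; exact hφ₀ s hs
      _ = exp (-(ν * t)) * (exp (ν * s) * φ s) := by rw [← mul_assoc, ← exp_add]; ring_nf

theorem backward_gronwall_general
    (T C K lam ν : ℝ) (hK : 0 ≤ K)
    (hlamν : lam ≤ ν)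
    (φ : ℝ → ℝ) (hφcont : ContinuousOn φ (Set.Icc T 0))
    (hφpos : ∀ t ∈ Set.Icc T (0 : ℝ), 0 ≤ φ t)
    (hineq : ∀ t ∈ Set.Icc T (0 : ℝ),
      φ t ≤ C * Real.exp (-(ν * t)) +
        K * ∫ s in t..0, Real.exp (-(lam * (t - s))) * φ s) :
    ∀ t ∈ Set.Icc T (0 : ℝ), φ t ≤ C * Real.exp (-((ν + K) * t)) := by
  set ψ : ℝ → ℝ := fun s => exp (ν * s) * φ s
  have hψ : ContinuousOn ψ (Icc T 0) :=
    (continuous_exp.comp (continuous_const_mul ν)).continuousOn.mul hφcont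
  have hψineq : ∀ t ∈ Icc T (0 : ℝ), ψ t ≤ C + K * ∫ s in t..0, ψ s := by
    intro t ht
    have hsub : Icc t 0 ⊆ Icc T 0 := Icc_subset_Icc_left ht.1
    have hint := integral_exp_neg_mul_sub_mul_le hlamν ht.2 (hφcont.mono hsub)
      fun s hs => hφpos s (hsub hs)
    have hcancel : exp (ν * t) * exp (-(ν * t)) = 1 := by rw [← exp_add]; simp
    calc ψ t ≤ exp (ν * t) *
          (C * exp (-(ν * t)) + K * (exp (-(ν * t)) * ∫ s in t..0, ψ s)) := by
          simp only [ψ]; gcongr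
          exact (hineq t ht).trans (add_le_add_right (mul_le_mul_of_nonneg_left hint hK) _)
      _ = C + K * ∫ s in t..0, ψ s := by
          linear_combination (C + K * ∫ s in t..0, ψ s) * hcancel
  intro t ht
  calc φ t = exp (-(ν * t)) * ψ t := by simp only [ψ]; rw [← mul_assoc, ← exp_add]; simp
    _ ≤ exp (-(ν * t)) * (C * exp (K * (0 - t))) := by
        gcongr; exact le_mul_exp_of_le_add_mul_integral hK hψ hψineq t ht
    _ = C * exp (-((ν + K) * t)) := by rw [mul_left_comm, ← exp_add]; ring_nf

/-- Backward-in-time Gronwall inequality: if `φ ≥ 0` is continuous on `[T, 0]` (`T ≤ 0`),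
`0 ≤ λ ≤ ν`, `C, K ≥ 0` and `φ(t) ≤ C e^{−νt} + K ∫_t^0 e^{−λ(t−s)} φ(s) ds` on `[T, 0]`,
then `φ(t) ≤ C e^{−(ν+K)t}` on `[T, 0]`. -/
theorem backward_gronwall
    (T C K lam ν : ℝ) (hT : T ≤ 0) (hC : 0 ≤ C) (hK : 0 ≤ K)
    (hlam : 0 ≤ lam) (hlamν : lam ≤ ν)
    (φ : ℝ → ℝ) (hφcont : ContinuousOn φ (Set.Icc T 0))
    (hφpos : ∀ t ∈ Set.Icc T (0 : ℝ), 0 ≤ φ t)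
    (hineq : ∀ t ∈ Set.Icc T (0 : ℝ),
      φ t ≤ C * Real.exp (-(ν * t)) +
        K * ∫ s in t..0, Real.exp (-(lam * (t - s))) * φ s) :
    ∀ t ∈ Set.Icc T (0 : ℝ), φ t ≤ C * Real.exp (-((ν + K) * t)) :=
  backward_gronwall_general T C K lam ν hK hlamν φ hφcont hφpos hineq
end

section
/- Let m ≥ 1, 0 ≤ α < 1, 0 < λ_1 ≤ … ≤ λ_m, and L_F > 0. On ℝ^m let |·| denote the Euclidean norm and |p|_α = (Σ_{i=1}^m λ_i^{2α} p_i²)^{1/2} the weighted α-norm, and let A : ℝ^m → ℝ^m be the diagonal linear map (Ap)_i = λ_i p_i. Let B : ℝ → L(ℝ^m, ℝ^m) be continuous with |B(t)w| ≤ 2 L_F |w|_α for all t ≤ 0 and all w ∈ ℝ^m. Let Θ : ℝ → L(ℝ^m, ℝ^m) be differentiable with Θ(0) = Id and Θ'(t) = −A ∘ Θ(t) + B(t) ∘ Θ(t) for all t ≤ 0. Then for every t ≤ 0 and every z ∈ ℝ^m, |Θ(t) z|_α ≤ e^{−(2 L_F λ_m^α + λ_m) t} |z|_α. -/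
/-!
For `u(s) = Θ(s) z` the weighted energy `φ(s) = |u(s)|_α²` satisfies `φ' ≥ -2cφ` on `[t, 0]`,
with `c = 2 L_F λ_m^α + λ_m`: the diagonal part of `φ'` is at least `-2λ_m φ`, and by
Cauchy–Schwarz the cross term `Σ λ_i^{2α} u_i (B u)_i` is at most `λ_m^α |u|_α |B u| ≤ 2 L_F λ_m^α φ`.
Hence `e^{2cs} φ(s)` is nondecreasing on `[t, 0]`; take square roots.
-/

open Real Set Finset

theorem le_exp_mul_sub_mul_of_neg_mul_le_deriv {φ φ' : ℝ → ℝ} {c a b : ℝ} (hab : a ≤ b)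
    (hφ : ∀ s ∈ Icc a b, HasDerivAt φ (φ' s) s) (h : ∀ s ∈ Icc a b, -c * φ s ≤ φ' s) :
    φ a ≤ exp (c * (b - a)) * φ b := by
  have hg : ∀ s ∈ Icc a b,
      HasDerivAt (fun r ↦ exp (c * r) * φ r) (exp (c * s) * (c * φ s + φ' s)) s := fun s hs ↦
    (((hasDerivAt_id s).const_mul c).exp.mul (hφ s hs)).congr_deriv (by simp only [id]; ring)
  have hmono : MonotoneOn (fun r ↦ exp (c * r) * φ r) (Icc a b) :=
    monotoneOn_of_hasDerivWithinAt_nonneg (convex_Icc a b)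
      (fun s hs ↦ (hg s hs).continuousAt.continuousWithinAt)
      (fun s hs ↦ (hg s (interior_subset hs)).hasDerivWithinAt)
      fun s hs ↦ mul_nonneg (exp_pos _).le (by linarith [h s (interior_subset hs)])
  have := hmono (left_mem_Icc.2 hab) (right_mem_Icc.2 hab) hab
  calc φ a = exp (c * (b - a)) * (exp (c * a) * φ a) / exp (c * b) := by
        rw [mul_sub, exp_sub]; field_simp
    _ ≤ exp (c * (b - a)) * (exp (c * b) * φ b) / exp (c * b) := by gcongr
    _ = exp (c * (b - a)) * φ b := by field_simp

section

variable {ι : Type*} [Fintype ι]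

theorem hasDerivAt_sum_mul_sq (w : ι → ℝ) {u : ℝ → EuclideanSpace ℝ ι}
    {u' : EuclideanSpace ℝ ι} {s : ℝ} (hu : HasDerivAt u u' s) :
    HasDerivAt (fun r ↦ ∑ i, w i * u r i ^ 2) (∑ i, w i * (2 * u s i * u' i)) s := by
  refine HasDerivAt.fun_sum fun i _ ↦ ?_
  have hi : HasDerivAt (fun r ↦ u r i) (u' i) s :=
    (EuclideanSpace.proj (𝕜 := ℝ) i).hasFDerivAt.comp_hasDerivAt s hu
  exact ((hi.fun_pow 2).const_mul (w i)).congr_deriv (by push_cast; ring)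

theorem sum_mul_mul_sq_le {w lam : ι → ℝ} {Λ : ℝ} (hw : ∀ i, 0 ≤ w i) (hlam : ∀ i, lam i ≤ Λ)
    (u : ι → ℝ) : ∑ i, lam i * (w i * u i ^ 2) ≤ Λ * ∑ i, w i * u i ^ 2 := by
  rw [mul_sum]
  exact sum_le_sum fun i _ ↦ mul_le_mul_of_nonneg_right (hlam i) (by have := hw i; positivity)

theorem neg_sum_mul_mul_le {w : ι → ℝ} {M K : ℝ} (hw : ∀ i, 0 ≤ w i) (hwM : ∀ i, w i ≤ M ^ 2)
    (hM : 0 ≤ M) (u v : EuclideanSpace ℝ ι) (hv : ‖v‖ ≤ K * √(∑ i, w i * u i ^ 2)) :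
    -∑ i, w i * u i * v i ≤ K * M * ∑ i, w i * u i ^ 2 := by
  set φ := ∑ i, w i * u i ^ 2
  have hφ : 0 ≤ φ := sum_nonneg fun i _ ↦ by have := hw i; positivity
  have hwu : √(∑ i, (-(w i * u i)) ^ 2) ≤ M * √φ := by
    rw [← sqrt_sq hM, ← sqrt_mul (sq_nonneg M)]
    refine sqrt_le_sqrt ?_
    rw [mul_sum]
    refine sum_le_sum fun i _ ↦ ?_
    calc (-(w i * u i)) ^ 2 = w i * (w i * u i ^ 2) := by ring
      _ ≤ M ^ 2 * (w i * u i ^ 2) := by gcongr; exacts [mul_nonneg (hw i) (sq_nonneg _), hwM i]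
  have hnorm : √(∑ i, v i ^ 2) = ‖v‖ := by
    rw [EuclideanSpace.norm_eq]; simp only [norm_eq_abs, sq_abs]
  calc -∑ i, w i * u i * v i = ∑ i, -(w i * u i) * v i := by simp only [neg_mul, sum_neg_distrib]
    _ ≤ √(∑ i, (-(w i * u i)) ^ 2) * √(∑ i, v i ^ 2) := sum_mul_le_sqrt_mul_sqrt _ _ _
    _ ≤ M * √φ * (K * √φ) := by rw [hnorm]; gcongr
    _ = K * M * φ := by rw [mul_mul_mul_comm, mul_self_sqrt hφ]; ring

theorem neg_mul_sum_le_sum_mul_deriv {w lam : ι → ℝ} {M K Λ : ℝ} (hw : ∀ i, 0 ≤ w i)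
    (hwM : ∀ i, w i ≤ M ^ 2) (hM : 0 ≤ M) (hlam : ∀ i, lam i ≤ Λ) (u v : EuclideanSpace ℝ ι)
    (hv : ‖v‖ ≤ K * √(∑ i, w i * u i ^ 2)) :
    -(2 * (K * M + Λ)) * ∑ i, w i * u i ^ 2 ≤ ∑ i, w i * (2 * u i * (-(lam i * u i) + v i)) := by
  have hdiag := sum_mul_mul_sq_le hw hlam u
  have hcross := neg_sum_mul_mul_le hw hwM hM u v hv
  have hsplit : ∑ i, w i * (2 * u i * (-(lam i * u i) + v i))
      = -2 * ∑ i, lam i * (w i * u i ^ 2) + 2 * ∑ i, w i * u i * v i := by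
    rw [mul_sum, mul_sum, ← sum_add_distrib]
    exact sum_congr rfl fun i _ ↦ by ring
  linarith

end

/-- Backward exponential bound for the linearized flow `Θ' = −A∘Θ + B(t)∘Θ`, `Θ(0) = Id`,
when `A` is diagonal with entries `0 < λ_1 ≤ … ≤ λ_m` and `|B(t)w| ≤ 2 L_F |w|_α` for
`t ≤ 0`, where `|w|_α = (Σ λ_i^{2α} w_i²)^{1/2}`:
`|Θ(t) z|_α ≤ e^{−(2 L_F λ_m^α + λ_m) t} |z|_α` for `t ≤ 0`. -/
theorem linearized_flow_backward_bound
    (m : ℕ) (hm : 0 < m) (α : ℝ) (hα0 : 0 ≤ α)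
    (lam : Fin m → ℝ) (hpos : ∀ i, 0 < lam i) (hmono : Monotone lam)
    (LF : ℝ)
    (A : EuclideanSpace ℝ (Fin m) →L[ℝ] EuclideanSpace ℝ (Fin m))
    (hA : ∀ (p : EuclideanSpace ℝ (Fin m)) (i : Fin m), A p i = lam i * p i)
    (B : ℝ → (EuclideanSpace ℝ (Fin m) →L[ℝ] EuclideanSpace ℝ (Fin m)))
    (hB : ∀ t ≤ (0 : ℝ), ∀ w : EuclideanSpace ℝ (Fin m),
      ‖B t w‖ ≤ 2 * LF * Real.sqrt (∑ i, lam i ^ (2 * α) * (w i) ^ 2))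
    (Θ : ℝ → (EuclideanSpace ℝ (Fin m) →L[ℝ] EuclideanSpace ℝ (Fin m)))
    (hΘ0 : Θ 0 = ContinuousLinearMap.id ℝ (EuclideanSpace ℝ (Fin m)))
    (hΘ : ∀ t ≤ (0 : ℝ), HasDerivAt Θ (-(A.comp (Θ t)) + (B t).comp (Θ t)) t) :
    ∀ t ≤ (0 : ℝ), ∀ z : EuclideanSpace ℝ (Fin m),
      Real.sqrt (∑ i, lam i ^ (2 * α) * (Θ t z i) ^ 2)
        ≤ Real.exp (-((2 * LF * lam ⟨m - 1, by omega⟩ ^ α + lam ⟨m - 1, by omega⟩) * t)) *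
          Real.sqrt (∑ i, lam i ^ (2 * α) * (z i) ^ 2) := by
  intro t ht z
  set lmax := lam ⟨m - 1, by omega⟩
  have hle : ∀ i, lam i ≤ lmax := fun i ↦ hmono (Fin.mk_le_mk.2 (by omega))
  have hw : ∀ i, 0 ≤ lam i ^ (2 * α) := fun i ↦ rpow_nonneg (hpos i).le _
  have hwM : ∀ i, lam i ^ (2 * α) ≤ (lmax ^ α) ^ 2 := fun i ↦ by
    rw [← rpow_natCast, ← rpow_mul (hpos _).le, mul_comm]
    exact rpow_le_rpow (hpos i).le (hle i) (by positivity)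
  set φ := fun s ↦ ∑ i, lam i ^ (2 * α) * (Θ s z i) ^ 2
  have hφ : ∀ s ∈ Icc t 0, HasDerivAt φ
      (∑ i, lam i ^ (2 * α) * (2 * Θ s z i * (-(lam i * Θ s z i) + B s (Θ s z) i))) s :=
    fun s hs ↦ by
      simpa [hA] using hasDerivAt_sum_mul_sq _ ((hΘ s hs.2).clm_apply (hasDerivAt_const s z))
  have hgrowth := le_exp_mul_sub_mul_of_neg_mul_le_deriv ht hφ fun s hs ↦
    neg_mul_sum_le_sum_mul_deriv hw hwM (rpow_nonneg (hpos _).le _) hle _ _ (hB s hs.2 _)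
  have hφ0 : φ 0 = ∑ i, lam i ^ (2 * α) * (z i) ^ 2 := by simp [φ, hΘ0]
  calc √(φ t) ≤ √(exp (2 * (2 * LF * lmax ^ α + lmax) * (0 - t)) * φ 0) := sqrt_le_sqrt hgrowth
    _ = _ := by
      rw [sqrt_mul (exp_pos _).le, ← exp_half, hφ0]
      ring_nf
end
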